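/- Let n ≥ 1, let Σ be a real symmetric positive definite n×n matrix, let Θ be a real antisymmetric n×n matrix, and let w ∈ ℝⁿ. Set ζ := (−Σ + iΘ) w ∈ ℂⁿ. Then π^{−n/2} √(det Σ) ∫_{ℝⁿ} e^{−uᵀΣu} sin(uᵀΘw) e^{−uᵀΣw} u uᵀ du = Im( (1/2) e^{(1/4) ζᵀΣ⁻¹ζ} ( Σ⁻¹ + (1/2) Σ⁻¹ ζ ζᵀ Σ⁻¹ ) ), where the matrix-valued integral is taken entrywise and converges absolutely. Equivalently, the left-hand side equals (1/(2i)) ( φ''_Σ((−Σ + iΘ)w) − φ''_Σ(−(Σ + iΘ)w) ), where φ''_Σ(z) := (1/2) e^{(1/4) zᵀΣ⁻¹z} ( Σ⁻¹ + (1/2) Σ⁻¹ z zᵀ Σ⁻¹ ). -/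

import Mathlib

/-!
Factor `Σ = BᵀB` (with `B = Σ^{1/2}`) and substitute `u = B⁻¹v`. The complex integrand
`e^{-uᵀΣu + uᵀz} u_j u_k` becomes `e^{-|v|² + vᵀη} (Pv)_j (Pv)_k` with `P = B⁻¹`, `η = Pᵀz`,
which splits into products of one-dimensional integrals `∫ x^p e^{-x² + ηx} dx`, `p ≤ 2`; these
follow from the Gaussian integral by integration by parts. The result is
`π^{-n/2}√(det Σ) ∫ e^{-uᵀΣu + uᵀz} u uᵀ du = φ''_Σ(z)` for every `z ∈ ℂⁿ`. Since
`uᵀζ = -uᵀΣw + i uᵀΘw`, the real integral is the imaginary part of this at `z = ζ`, and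
`−(Σ + iΘ)w = ζ̄` gives `φ''_Σ(ζ̄) = conj φ''_Σ(ζ)`.
-/

open MeasureTheory Matrix Real

noncomputable section

/-- Quadratic form `uᵀ A u`. -/
def qf {n : ℕ} (A : Matrix (Fin n) (Fin n) ℝ) (u : Fin n → ℝ) : ℝ := u ⬝ᵥ A.mulVec u

/-- Complex bilinear form `zᵀ A z` (no conjugation) for a real matrix `A`. -/
def qfC {n : ℕ} (A : Matrix (Fin n) (Fin n) ℝ) (z : Fin n → ℂ) : ℂ :=
  z ⬝ᵥ (A.map (fun a => (a : ℂ))).mulVec z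

/-- The normalizing constant `π^{-n/2} √(det Σ)`. -/
def gaussConst {n : ℕ} (Sg : Matrix (Fin n) (Fin n) ℝ) : ℝ :=
  (Real.sqrt (π ^ n))⁻¹ * Real.sqrt Sg.det

/-- `(−Σ + iΘ) w ∈ ℂⁿ`. -/
def zetaP {n : ℕ} (Sg Th : Matrix (Fin n) (Fin n) ℝ) (w : Fin n → ℝ) : Fin n → ℂ :=
  (Sg.map (fun a => (-a : ℂ)) + Complex.I • Th.map (fun a => (a : ℂ))).mulVec
    (fun k => (w k : ℂ))

/-- `−(Σ + iΘ) w ∈ ℂⁿ`. -/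
def zetaM {n : ℕ} (Sg Th : Matrix (Fin n) (Fin n) ℝ) (w : Fin n → ℝ) : Fin n → ℂ :=
  (Sg.map (fun a => (-a : ℂ)) - Complex.I • Th.map (fun a => (a : ℂ))).mulVec
    (fun k => (w k : ℂ))

/-- The Hessian `φ''_Σ(z) = (1/2) e^{(1/4) zᵀΣ⁻¹z} (Σ⁻¹ + (1/2) Σ⁻¹ z zᵀ Σ⁻¹)` of the complex
moment-generating function of the Gaussian density `π^{-n/2}√(det Σ) e^{-uᵀΣu}`. -/
def mgfHess {n : ℕ} (Sg : Matrix (Fin n) (Fin n) ℝ) (z : Fin n → ℂ) :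
    Matrix (Fin n) (Fin n) ℂ :=
  ((1/2 : ℂ) * Complex.exp ((1/4 : ℂ) * qfC Sg⁻¹ z)) •
    (Sg⁻¹.map (fun a => (a : ℂ)) +
      (1/2 : ℂ) • vecMulVec ((Sg⁻¹.map (fun a => (a : ℂ))).mulVec z)
        (vecMul z (Sg⁻¹.map (fun a => (a : ℂ)))))

open Complex ComplexConjugate

section OneDim

variable (η : ℂ)

lemma norm_pow_mul_cexp_neg_sq_add_le (p : ℕ) (x : ℝ) :
    ‖(x : ℂ) ^ p * cexp (-(x : ℂ) ^ 2 + η * x)‖ ≤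
      Real.exp (η.re ^ 2 / 2) * |x ^ (p : ℝ) * Real.exp (-(1 / 2) * x ^ 2)| := by
  have hexp : -x ^ 2 + η.re * x ≤ η.re ^ 2 / 2 + -(1 / 2) * x ^ 2 := by
    nlinarith [sq_nonneg (x - η.re)]
  rw [norm_mul, norm_pow, Complex.norm_exp, Complex.norm_real, Real.norm_eq_abs, abs_mul,
    Real.rpow_natCast, abs_pow, abs_of_pos (Real.exp_pos _), mul_left_comm, ← Real.exp_add]
  gcongr
  simpa [← Complex.ofReal_pow] using hexp

lemma integrable_pow_mul_cexp_neg_sq_add (p : ℕ) :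
    Integrable fun x : ℝ => (x : ℂ) ^ p * cexp (-(x : ℂ) ^ 2 + η * x) := by
  have hbound := ((integrable_rpow_mul_exp_neg_mul_sq (b := 1 / 2) (by norm_num)
    (s := p) (by linarith [p.cast_nonneg (α := ℝ)])).abs).const_mul (Real.exp (η.re ^ 2 / 2))
  exact hbound.mono' (by fun_prop) (ae_of_all _ (norm_pow_mul_cexp_neg_sq_add_le η p))

lemma integrable_cexp_neg_sq_add : Integrable fun x : ℝ => cexp (-(x : ℂ) ^ 2 + η * x) := by
  simpa using integrable_pow_mul_cexp_neg_sq_add η 0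

lemma integrable_mul_cexp_neg_sq_add :
    Integrable fun x : ℝ => (x : ℂ) * cexp (-(x : ℂ) ^ 2 + η * x) := by
  simpa using integrable_pow_mul_cexp_neg_sq_add η 1

lemma hasDerivAt_neg_sq_add_mul (x : ℝ) :
    HasDerivAt (fun x : ℝ => -(x : ℂ) ^ 2 + η * x) (-2 * x + η) x := by
  have hx : HasDerivAt (fun x : ℝ => (x : ℂ)) 1 x := (hasDerivAt_id x).ofReal_comp
  exact ((hx.fun_pow 2).fun_neg.fun_add (hx.const_mul η)).congr_deriv (by norm_num)

lemma integral_cexp_neg_sq_add :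
    ∫ x : ℝ, cexp (-(x : ℂ) ^ 2 + η * x) = √π * cexp (η ^ 2 / 4) := by
  have h := integral_cexp_quadratic (b := -1) (by norm_num) η 0
  simp only [neg_one_mul, add_zero, zero_sub, neg_neg, div_one] at h
  rw [h, Real.sqrt_eq_rpow, Complex.ofReal_cpow pi_pos.le]
  congr 2
  · norm_num
  · ring

lemma integral_mul_cexp_neg_sq_add :
    ∫ x : ℝ, (x : ℂ) * cexp (-(x : ℂ) ^ 2 + η * x) = η / 2 * (√π * cexp (η ^ 2 / 4)) := by
  have h0 := integrable_cexp_neg_sq_add η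
  have h1 := integrable_mul_cexp_neg_sq_add η
  have hibp := integral_eq_zero_of_hasDerivAt_of_integrable
    (f' := fun x : ℝ =>
      η * cexp (-(x : ℂ) ^ 2 + η * x) - 2 * ((x : ℂ) * cexp (-(x : ℂ) ^ 2 + η * x)))
    (fun x => ((hasDerivAt_neg_sq_add_mul η x).cexp).congr_deriv (by ring))
    ((h0.const_mul η).sub (h1.const_mul 2)) h0
  rw [integral_sub (h0.const_mul η) (h1.const_mul 2), integral_const_mul, integral_const_mul,
    integral_cexp_neg_sq_add] at hibp
  linear_combination -hibp / 2

lemma integral_sq_mul_cexp_neg_sq_add :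
    ∫ x : ℝ, (x : ℂ) ^ 2 * cexp (-(x : ℂ) ^ 2 + η * x) =
      (1 / 2 + η ^ 2 / 4) * (√π * cexp (η ^ 2 / 4)) := by
  have h0 := integrable_cexp_neg_sq_add η
  have h1 := integrable_mul_cexp_neg_sq_add η
  have h2 := integrable_pow_mul_cexp_neg_sq_add η 2
  have h01 : Integrable fun x : ℝ =>
      cexp (-(x : ℂ) ^ 2 + η * x) + η * ((x : ℂ) * cexp (-(x : ℂ) ^ 2 + η * x)) :=
    h0.add (h1.const_mul η)
  have hibp := integral_eq_zero_of_hasDerivAt_of_integrable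
    (f' := fun x : ℝ => cexp (-(x : ℂ) ^ 2 + η * x) + η * ((x : ℂ) * cexp (-(x : ℂ) ^ 2 + η * x))
      - 2 * ((x : ℂ) ^ 2 * cexp (-(x : ℂ) ^ 2 + η * x)))
    (fun x => (((hasDerivAt_id x).ofReal_comp).mul
      (hasDerivAt_neg_sq_add_mul η x).cexp).congr_deriv (by simp only [id_eq, ofReal_one]; ring))
    (h01.sub (h2.const_mul 2)) h1
  rw [integral_sub h01 (h2.const_mul 2), integral_add h0 (h1.const_mul η),
    integral_const_mul, integral_const_mul, integral_cexp_neg_sq_add,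
    integral_mul_cexp_neg_sq_add] at hibp
  linear_combination -hibp / 2

/-- Only the values for `p ≤ 2` are meaningful (see `integral_pow_mul_cexp_neg_sq_add`). -/
def gaussMoment : ℕ → ℂ → ℂ
  | 0, _ => 1
  | 1, η => η / 2
  | _, η => 1 / 2 + η ^ 2 / 4

lemma integral_pow_mul_cexp_neg_sq_add {p : ℕ} (hp : p ≤ 2) :
    ∫ x : ℝ, (x : ℂ) ^ p * cexp (-(x : ℂ) ^ 2 + η * x) =
      gaussMoment p η * (√π * cexp (η ^ 2 / 4)) := by
  interval_cases p
  · simpa [gaussMoment] using integral_cexp_neg_sq_add η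
  · simpa [gaussMoment] using integral_mul_cexp_neg_sq_add η
  · exact integral_sq_mul_cexp_neg_sq_add η

end OneDim

section StandardGaussian

variable {n : ℕ} (η : Fin n → ℂ)

lemma prod_gaussMoment_single_add_single (a b : Fin n) :
    ∏ i, gaussMoment ((Pi.single a 1 + Pi.single b 1 : Fin n → ℕ) i) (η i) =
      (if a = b then 1 / 2 else 0) + η a * η b / 4 := by
  by_cases hab : a = b
  · subst hab
    rw [Fintype.prod_eq_single a fun i hi => by simp [hi, gaussMoment]]
    simp [gaussMoment, sq]
  · rw [Fintype.prod_eq_mul a b hab fun i hi => by simp [hi.1, hi.2, gaussMoment]]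
    simp only [gaussMoment, Pi.add_apply, Pi.single_eq_same, Pi.single_eq_of_ne hab,
      Pi.single_eq_of_ne (Ne.symm hab), add_zero, zero_add, if_neg hab]
    ring

lemma cexp_neg_dotProduct_self_add_mul_eq_prod (v : Fin n → ℝ) (a b : Fin n) :
    cexp (-((v ⬝ᵥ v : ℝ) : ℂ) + (ofReal ∘ v) ⬝ᵥ η) * ((v a : ℂ) * v b) =
      ∏ i, (v i : ℂ) ^ ((Pi.single a 1 + Pi.single b 1 : Fin n → ℕ) i) *
        cexp (-(v i : ℂ) ^ 2 + η i * v i) := by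
  rw [Finset.prod_mul_distrib, ← Complex.exp_sum]
  simp only [Pi.add_apply, pow_add, Finset.prod_mul_distrib, Pi.single_apply, pow_ite, pow_one,
    pow_zero, Finset.prod_ite_eq', Finset.mem_univ, if_true]
  simp only [dotProduct, Function.comp_apply, Finset.sum_add_distrib, Finset.sum_neg_distrib,
    mul_comm (η _), sq]
  push_cast
  ring

lemma integrable_cexp_neg_dotProduct_self_add_mul (a b : Fin n) :
    Integrable fun v : Fin n → ℝ =>
      cexp (-((v ⬝ᵥ v : ℝ) : ℂ) + (ofReal ∘ v) ⬝ᵥ η) * ((v a : ℂ) * v b) := by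
  simp only [cexp_neg_dotProduct_self_add_mul_eq_prod]
  exact Integrable.fintype_prod fun i => integrable_pow_mul_cexp_neg_sq_add (η i) _

lemma integral_cexp_neg_dotProduct_self_add_mul (a b : Fin n) :
    ∫ v : Fin n → ℝ, cexp (-((v ⬝ᵥ v : ℝ) : ℂ) + (ofReal ∘ v) ⬝ᵥ η) * ((v a : ℂ) * v b) =
      √π ^ n * cexp (η ⬝ᵥ η / 4) * ((if a = b then 1 / 2 else 0) + η a * η b / 4) := by
  have hp : ∀ i, (Pi.single a 1 + Pi.single b 1 : Fin n → ℕ) i ≤ 2 := fun i => by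
    simp only [Pi.add_apply, Pi.single_apply]; split_ifs <;> norm_num
  simp only [cexp_neg_dotProduct_self_add_mul_eq_prod]
  rw [integral_fintype_prod_volume_eq_prod
    (fun i (x : ℝ) => (x : ℂ) ^ _ * cexp (-(x : ℂ) ^ 2 + η i * x)),
    Finset.prod_congr rfl fun i _ => integral_pow_mul_cexp_neg_sq_add (η i) (hp i),
    Finset.prod_mul_distrib, Finset.prod_mul_distrib, prod_gaussMoment_single_add_single,
    Finset.prod_const, Finset.card_univ, Fintype.card_fin, ← Complex.exp_sum, dotProduct,
    Finset.sum_div]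
  simp only [sq]
  ring

variable {m : Type*} (P : Matrix m (Fin n) ℂ)

lemma mulVec_mul_mulVec_eq_sum (x : Fin n → ℂ) (j k : m) :
    (P *ᵥ x) j * (P *ᵥ x) k = ∑ a, ∑ b, P j a * P k b * (x a * x b) := by
  simp only [mulVec, dotProduct, Finset.sum_mul_sum]
  exact Finset.sum_congr rfl fun a _ => Finset.sum_congr rfl fun b _ => by ring

lemma cexp_neg_dotProduct_self_add_mul_mulVec_eq_sum (j k : m) :
    (fun v : Fin n → ℝ => cexp (-((v ⬝ᵥ v : ℝ) : ℂ) + (ofReal ∘ v) ⬝ᵥ η) *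
      ((P *ᵥ (ofReal ∘ v)) j * (P *ᵥ (ofReal ∘ v)) k)) =
    fun v => ∑ a, ∑ b, P j a * P k b *
      (cexp (-((v ⬝ᵥ v : ℝ) : ℂ) + (ofReal ∘ v) ⬝ᵥ η) * ((v a : ℂ) * v b)) := by
  ext v
  simp only [mulVec_mul_mulVec_eq_sum, Finset.mul_sum, Function.comp_apply]
  exact Finset.sum_congr rfl fun a _ => Finset.sum_congr rfl fun b _ => by ring

lemma integrable_cexp_neg_dotProduct_self_add_mul_mulVec (j k : m) :
    Integrable fun v : Fin n → ℝ => cexp (-((v ⬝ᵥ v : ℝ) : ℂ) + (ofReal ∘ v) ⬝ᵥ η) *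
      ((P *ᵥ (ofReal ∘ v)) j * (P *ᵥ (ofReal ∘ v)) k) := by
  rw [cexp_neg_dotProduct_self_add_mul_mulVec_eq_sum]
  exact integrable_finsetSum _ fun a _ => integrable_finsetSum _ fun b _ =>
    (integrable_cexp_neg_dotProduct_self_add_mul η a b).const_mul _

lemma integral_cexp_neg_dotProduct_self_add_mul_mulVec (j k : m) :
    ∫ v : Fin n → ℝ, cexp (-((v ⬝ᵥ v : ℝ) : ℂ) + (ofReal ∘ v) ⬝ᵥ η) *
      ((P *ᵥ (ofReal ∘ v)) j * (P *ᵥ (ofReal ∘ v)) k) =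
      √π ^ n * cexp (η ⬝ᵥ η / 4) * ((P * Pᵀ) j k / 2 + (P *ᵥ η) j * (P *ᵥ η) k / 4) := by
  have hint a b := (integrable_cexp_neg_dotProduct_self_add_mul η a b).const_mul (P j a * P k b)
  rw [cexp_neg_dotProduct_self_add_mul_mulVec_eq_sum,
    integral_finsetSum _ fun a _ => integrable_finsetSum _ fun b _ => hint a b]
  simp only [integral_finsetSum _ fun b _ => hint _ b, integral_const_mul,
    integral_cexp_neg_dotProduct_self_add_mul, mulVec_mul_mulVec_eq_sum, mul_apply,
    transpose_apply, mul_add, mul_ite, mul_zero, Finset.sum_add_distrib, Finset.sum_ite_eq,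
    Finset.mem_univ, if_true, Finset.mul_sum, Finset.sum_div]
  congr 1
  · exact Finset.sum_congr rfl fun a _ => by ring
  · exact Finset.sum_congr rfl fun a _ => Finset.sum_congr rfl fun b _ => by ring

end StandardGaussian

section LinearChangeOfVariables

variable {ι : Type*} [Fintype ι] [DecidableEq ι] {M : Matrix ι ι ℝ}

lemma measurableEmbedding_mulVec (hM : M.det ≠ 0) : MeasurableEmbedding (M *ᵥ ·) :=
  ((toLin' M).equivOfDetNeZero (by rwa [LinearMap.det_toLin'])).toContinuousLinearEquiv
    |>.toHomeomorph.measurableEmbedding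

lemma map_mulVec_volume (hM : M.det ≠ 0) :
    Measure.map (M *ᵥ ·) volume = ENNReal.ofReal |M.det|⁻¹ • (volume : Measure (ι → ℝ)) := by
  rw [← abs_inv]
  exact Real.map_matrix_volume_pi_eq_smul_volume_pi hM

variable {E : Type*} [NormedAddCommGroup E]

lemma integrable_comp_mulVec_iff (hM : M.det ≠ 0) {g : (ι → ℝ) → E} :
    Integrable (fun v => g (M *ᵥ v)) ↔ Integrable g := by
  change Integrable (g ∘ (M *ᵥ ·)) _ ↔ _
  rw [← (measurableEmbedding_mulVec hM).integrable_map_iff, map_mulVec_volume hM,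
    integrable_smul_measure (by simpa using hM) ENNReal.ofReal_ne_top]

lemma integral_comp_mulVec [NormedSpace ℝ E] (hM : M.det ≠ 0) (g : (ι → ℝ) → E) :
    ∫ v, g (M *ᵥ v) = |M.det|⁻¹ • ∫ u, g u := by
  rw [← (measurableEmbedding_mulVec hM).integral_map, map_mulVec_volume hM, integral_smul_measure,
    ENNReal.toReal_ofReal (by positivity)]

end LinearChangeOfVariables

section Complexification

variable {l m o : Type*} [Fintype m]

lemma map_ofReal_mul (A : Matrix l m ℝ) (C : Matrix m o ℝ) :
    (A * C).map (fun a => (a : ℂ)) = A.map (fun a => (a : ℂ)) * C.map (fun a => (a : ℂ)) :=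
  Matrix.map_mul (f := ofRealHom)

lemma ofReal_comp_mulVec (A : Matrix l m ℝ) (v : m → ℝ) :
    ofReal ∘ (A *ᵥ v) = A.map (fun a => (a : ℂ)) *ᵥ (ofReal ∘ v) :=
  funext (RingHom.map_mulVec ofRealHom A v)

end Complexification

section GaussianIntegral

variable {n : ℕ} (B : Matrix (Fin n) (Fin n) ℝ)

lemma det_nonsing_inv_ne_zero (hB : B.det ≠ 0) : B⁻¹.det ≠ 0 :=
  (B.isUnit_nonsing_inv_det (isUnit_iff_ne_zero.mpr hB)).ne_zero

lemma inv_transpose_mul_self : (Bᵀ * B)⁻¹ = B⁻¹ * B⁻¹ᵀ := by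
  rw [Matrix.mul_inv_rev, transpose_nonsing_inv]

lemma qf_transpose_mul_self_mulVec_inv (hB : B.det ≠ 0) (v : Fin n → ℝ) :
    qf (Bᵀ * B) (B⁻¹ *ᵥ v) = v ⬝ᵥ v := by
  have hBB : B * B⁻¹ = 1 := B.mul_nonsing_inv (isUnit_iff_ne_zero.mpr hB)
  rw [qf, mulVec_mulVec, Matrix.mul_assoc, hBB, Matrix.mul_one, dotProduct_mulVec,
    vecMul_transpose, mulVec_mulVec, hBB, one_mulVec]

lemma gaussConst_transpose_mul_self : gaussConst (Bᵀ * B) = |B.det| / √π ^ n := by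
  have hsqrt : √(π ^ n) = √π ^ n := by
    rw [← Real.sqrt_sq (by positivity : 0 ≤ √π ^ n), ← pow_mul, mul_comm, pow_mul,
      Real.sq_sqrt pi_pos.le]
  rw [gaussConst, det_mul, det_transpose, Real.sqrt_mul_self_eq_abs, hsqrt, inv_mul_eq_div]

lemma mgfHess_apply_of_map_inv_eq {o : Type*} [Fintype o] (S : Matrix (Fin n) (Fin n) ℝ)
    (P : Matrix (Fin n) o ℂ) (hS : S⁻¹.map (fun a => (a : ℂ)) = P * Pᵀ) (z : Fin n → ℂ)
    (j k : Fin n) :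
    mgfHess S z j k = 1 / 2 * cexp ((Pᵀ *ᵥ z) ⬝ᵥ (Pᵀ *ᵥ z) / 4) *
      ((P * Pᵀ) j k + 1 / 2 * ((P *ᵥ (Pᵀ *ᵥ z)) j * (P *ᵥ (Pᵀ *ᵥ z)) k)) := by
  have hsymm : z ᵥ* (P * Pᵀ) = P *ᵥ (Pᵀ *ᵥ z) := by
    rw [← vecMul_vecMul, vecMul_transpose, ← mulVec_transpose, mulVec_mulVec]
  have hqf : qfC S⁻¹ z = (Pᵀ *ᵥ z) ⬝ᵥ (Pᵀ *ᵥ z) := by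
    rw [qfC, hS, ← mulVec_mulVec, dotProduct_mulVec, ← mulVec_transpose]
  simp only [mgfHess, hS, hqf, hsymm, Matrix.smul_apply, Matrix.add_apply, smul_eq_mul,
    vecMulVec_apply, mulVec_mulVec, one_div_mul_eq_div]

variable (z : Fin n → ℂ) (j k : Fin n)

lemma cexp_neg_qf_add_mul_comp_mulVec_inv (hB : B.det ≠ 0) (v : Fin n → ℝ) :
    cexp (-(qf (Bᵀ * B) (B⁻¹ *ᵥ v) : ℂ) + (ofReal ∘ (B⁻¹ *ᵥ v)) ⬝ᵥ z) *
        (((B⁻¹ *ᵥ v) j * (B⁻¹ *ᵥ v) k : ℝ) : ℂ) =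
      cexp (-((v ⬝ᵥ v : ℝ) : ℂ) + (ofReal ∘ v) ⬝ᵥ ((B⁻¹.map (fun a => (a : ℂ)))ᵀ *ᵥ z)) *
        ((B⁻¹.map (fun a => (a : ℂ)) *ᵥ (ofReal ∘ v)) j *
          (B⁻¹.map (fun a => (a : ℂ)) *ᵥ (ofReal ∘ v)) k) := by
  have hv i : ((B⁻¹ *ᵥ v) i : ℂ) = (B⁻¹.map (fun a => (a : ℂ)) *ᵥ (ofReal ∘ v)) i :=
    congrFun (ofReal_comp_mulVec _ v) i
  rw [qf_transpose_mul_self_mulVec_inv B hB, ofReal_comp_mulVec, dotProduct_mulVec (ofReal ∘ v),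
    vecMul_transpose, ofReal_mul, hv, hv]

lemma integrable_cexp_neg_qf_add_mul (hB : B.det ≠ 0) :
    Integrable fun u : Fin n → ℝ =>
      cexp (-(qf (Bᵀ * B) u : ℂ) + (ofReal ∘ u) ⬝ᵥ z) * ((u j * u k : ℝ) : ℂ) := by
  rw [← integrable_comp_mulVec_iff (det_nonsing_inv_ne_zero B hB)]
  simp only [cexp_neg_qf_add_mul_comp_mulVec_inv B z j k hB]
  exact integrable_cexp_neg_dotProduct_self_add_mul_mulVec _ _ j k

theorem gaussConst_mul_integral_cexp_neg_qf_add_mul (hB : B.det ≠ 0) :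
    (gaussConst (Bᵀ * B) : ℂ) *
        ∫ u : Fin n → ℝ, cexp (-(qf (Bᵀ * B) u : ℂ) + (ofReal ∘ u) ⬝ᵥ z) * ((u j * u k : ℝ) : ℂ) =
      mgfHess (Bᵀ * B) z j k := by
  set P := B⁻¹.map (fun a => (a : ℂ))
  have hS : (Bᵀ * B)⁻¹.map (fun a => (a : ℂ)) = P * Pᵀ := by
    rw [inv_transpose_mul_self, map_ofReal_mul, transpose_map]
  have hdet : |B⁻¹.det| = |B.det|⁻¹ := by
    rw [det_nonsing_inv, Ring.inverse_eq_inv', abs_inv]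
  have hcov := integral_comp_mulVec (det_nonsing_inv_ne_zero B hB) fun u : Fin n → ℝ =>
    cexp (-(qf (Bᵀ * B) u : ℂ) + (ofReal ∘ u) ⬝ᵥ z) * ((u j * u k : ℝ) : ℂ)
  simp only [cexp_neg_qf_add_mul_comp_mulVec_inv B z j k hB,
    integral_cexp_neg_dotProduct_self_add_mul_mulVec, hdet, inv_inv, Complex.real_smul] at hcov
  have hπ : (√π : ℂ) ≠ 0 := ofReal_ne_zero.mpr (Real.sqrt_pos.mpr pi_pos).ne'
  rw [mgfHess_apply_of_map_inv_eq _ P hS, gaussConst_transpose_mul_self, ofReal_div, ofReal_pow,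
    div_mul_eq_mul_div, ← hcov]
  field_simp
  ring

end GaussianIntegral

open scoped MatrixOrder in
lemma Matrix.PosDef.exists_transpose_mul_self {n : ℕ} {Sg : Matrix (Fin n) (Fin n) ℝ}
    (hpos : Sg.PosDef) : ∃ B : Matrix (Fin n) (Fin n) ℝ, B.det ≠ 0 ∧ Bᵀ * B = Sg := by
  have hsymm : (CFC.sqrt Sg)ᵀ = CFC.sqrt Sg := by
    simpa [IsHermitian, conjTranspose_eq_transpose_of_trivial] using
      (CFC.sqrt_nonneg Sg).posSemidef.isHermitian
  have hsq : CFC.sqrt Sg * CFC.sqrt Sg = Sg := CFC.sqrt_mul_sqrt_self Sg hpos.posSemidef.nonneg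
  refine ⟨CFC.sqrt Sg, fun h => hpos.det_pos.ne' ?_, by rw [hsymm, hsq]⟩
  rw [← hsq, det_mul, h, zero_mul]

section Zeta

variable {n : ℕ} (Sg Th : Matrix (Fin n) (Fin n) ℝ) (w : Fin n → ℝ)

lemma ofReal_comp_dotProduct_zetaP (u : Fin n → ℝ) :
    (ofReal ∘ u) ⬝ᵥ zetaP Sg Th w =
      ((-(u ⬝ᵥ Sg *ᵥ w) : ℝ) : ℂ) + ((u ⬝ᵥ Th *ᵥ w : ℝ) : ℂ) * I := by
  simp only [zetaP, dotProduct, mulVec, Function.comp_apply, Matrix.add_apply, Matrix.smul_apply,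
    Matrix.map_apply, smul_eq_mul, add_mul, Finset.sum_add_distrib, Finset.mul_sum, mul_add]
  push_cast
  simp only [Finset.sum_mul, ← Finset.sum_neg_distrib]
  congr 1 <;> exact Finset.sum_congr rfl fun a _ => Finset.sum_congr rfl fun b _ => by ring

lemma im_cexp_neg_qf_add_zetaP_mul (u : Fin n → ℝ) (j k : Fin n) :
    (cexp (-(qf Sg u : ℂ) + (ofReal ∘ u) ⬝ᵥ zetaP Sg Th w) * ((u j * u k : ℝ) : ℂ)).im =
      Real.exp (-(qf Sg u)) * Real.sin (u ⬝ᵥ Th.mulVec w) *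
        Real.exp (-(u ⬝ᵥ Sg.mulVec w)) * (u j * u k) := by
  rw [im_mul_ofReal, ofReal_comp_dotProduct_zetaP, ← add_assoc, ← ofReal_neg, ← ofReal_add,
    exp_im]
  simp only [add_re, ofReal_re, re_ofReal_mul, I_re, add_im, ofReal_im, im_ofReal_mul, I_im,
    mul_zero, mul_one, add_zero, zero_add, Real.exp_add]
  ring

lemma zetaM_eq_conj_zetaP : zetaM Sg Th w = fun i => conj (zetaP Sg Th w i) := by
  ext i
  simp [zetaM, zetaP, mulVec, dotProduct, sub_eq_add_neg]

lemma mgfHess_conj (z : Fin n → ℂ) (j k : Fin n) :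
    mgfHess Sg (fun i => conj (z i)) j k = conj (mgfHess Sg z j k) := by
  simp [mgfHess, qfC, mulVec, vecMul, dotProduct, vecMulVec_apply, map_sum, map_ofNat,
    ← Complex.exp_conj]

end Zeta

theorem stmt12_general {n : ℕ} (Sg : Matrix (Fin n) (Fin n) ℝ) (hpos : Sg.PosDef)
    (Th : Matrix (Fin n) (Fin n) ℝ) (w : Fin n → ℝ) :
    (∀ j k : Fin n,
      Integrable (fun u : Fin n → ℝ =>
        Real.exp (-(qf Sg u)) * Real.sin (u ⬝ᵥ Th.mulVec w) *
          Real.exp (-(u ⬝ᵥ Sg.mulVec w)) * (u j * u k))) ∧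
    (∀ j k : Fin n,
      gaussConst Sg *
          ∫ u : Fin n → ℝ,
            Real.exp (-(qf Sg u)) * Real.sin (u ⬝ᵥ Th.mulVec w) *
              Real.exp (-(u ⬝ᵥ Sg.mulVec w)) * (u j * u k) =
        (mgfHess Sg (zetaP Sg Th w) j k).im) ∧
    ∀ j k : Fin n,
      ((gaussConst Sg *
          ∫ u : Fin n → ℝ,
            Real.exp (-(qf Sg u)) * Real.sin (u ⬝ᵥ Th.mulVec w) *
              Real.exp (-(u ⬝ᵥ Sg.mulVec w)) * (u j * u k) : ℝ) : ℂ) =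
        (1 / (2 * Complex.I)) *
          (mgfHess Sg (zetaP Sg Th w) j k - mgfHess Sg (zetaM Sg Th w) j k) := by
  obtain ⟨B, hB, rfl⟩ := hpos.exists_transpose_mul_self
  have hint j k := integrable_cexp_neg_qf_add_mul B (zetaP (Bᵀ * B) Th w) j k hB
  have him j k : gaussConst (Bᵀ * B) * ∫ u : Fin n → ℝ,
      Real.exp (-(qf (Bᵀ * B) u)) * Real.sin (u ⬝ᵥ Th.mulVec w) *
        Real.exp (-(u ⬝ᵥ (Bᵀ * B).mulVec w)) * (u j * u k) =
      (mgfHess (Bᵀ * B) (zetaP (Bᵀ * B) Th w) j k).im := by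
    rw [← gaussConst_mul_integral_cexp_neg_qf_add_mul B _ j k hB, im_ofReal_mul]
    congr 1
    simpa only [RCLike.im_to_complex, im_cexp_neg_qf_add_zetaP_mul] using integral_im (hint j k)
  refine ⟨fun j k => ?_, him, fun j k => ?_⟩
  · simpa only [RCLike.im_to_complex, im_cexp_neg_qf_add_zetaP_mul] using (hint j k).im
  · rw [him, zetaM_eq_conj_zetaP, mgfHess_conj, sub_conj]
    field_simp
    push_cast
    ring

/-- with `ζ := (−Σ + iΘ)w`,
`π^{−n/2}√(det Σ) ∫ e^{−uᵀΣu} sin(uᵀΘw) e^{−uᵀΣw} u uᵀ du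
  = Im((1/2) e^{(1/4)ζᵀΣ⁻¹ζ}(Σ⁻¹ + (1/2)Σ⁻¹ζζᵀΣ⁻¹))`,
entrywise, with absolute convergence; equivalently the left-hand side equals
`(1/(2i))(φ''_Σ((−Σ+iΘ)w) − φ''_Σ(−(Σ+iΘ)w))`. -/
theorem stmt12 {n : ℕ} (hn : 1 ≤ n) (Sg : Matrix (Fin n) (Fin n) ℝ)
    (hsymm : Sg.IsSymm) (hpos : Sg.PosDef)
    (Th : Matrix (Fin n) (Fin n) ℝ) (hanti : Thᵀ = -Th) (w : Fin n → ℝ) :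
    (∀ j k : Fin n,
      Integrable (fun u : Fin n → ℝ =>
        Real.exp (-(qf Sg u)) * Real.sin (u ⬝ᵥ Th.mulVec w) *
          Real.exp (-(u ⬝ᵥ Sg.mulVec w)) * (u j * u k))) ∧
    (∀ j k : Fin n,
      gaussConst Sg *
          ∫ u : Fin n → ℝ,
            Real.exp (-(qf Sg u)) * Real.sin (u ⬝ᵥ Th.mulVec w) *
              Real.exp (-(u ⬝ᵥ Sg.mulVec w)) * (u j * u k) =
        (mgfHess Sg (zetaP Sg Th w) j k).im) ∧
    ∀ j k : Fin n,
      ((gaussConst Sg *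
          ∫ u : Fin n → ℝ,
            Real.exp (-(qf Sg u)) * Real.sin (u ⬝ᵥ Th.mulVec w) *
              Real.exp (-(u ⬝ᵥ Sg.mulVec w)) * (u j * u k) : ℝ) : ℂ) =
        (1 / (2 * Complex.I)) *
          (mgfHess Sg (zetaP Sg Th w) j k - mgfHess Sg (zetaM Sg Th w) j k) :=
  stmt12_general Sg hpos Th w
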